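/- arXiv:1403.0445 — 4 statements merged into one kernel-verified Lean document; each statement's English description precedes it below -/
import Mathlib

section
/- For any nonempty finite set of prefixes all containing a common address a, the set is totally ordered by specificity; in particular it has a unique most specific element. -/
/-- Addresses are bitvectors of fixed length `n`. -/
abbrev Addr (n : ℕ) := Fin n → Bool

/-- The set of addresses denoted by the prefix `p/plen`. -/
def pset (n : ℕ) (P : Addr n × ℕ) : Set (Addr n) :=
  {a | ∀ i : Fin n, (i : ℕ) < P.2 → a i = P.1 i}

theorem pset_subset_pset_of_mem_of_le {n : ℕ} {P Q : Addr n × ℕ} {a : Addr n}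
    (haP : a ∈ pset n P) (haQ : a ∈ pset n Q) (hle : Q.2 ≤ P.2) :
    pset n P ⊆ pset n Q := by
  intro x hx i hi
  rw [hx i (hi.trans_le hle), ← haP i (hi.trans_le hle), haQ i hi]

theorem pset_subset_or_subset_of_mem {n : ℕ} {P Q : Addr n × ℕ} {a : Addr n}
    (haP : a ∈ pset n P) (haQ : a ∈ pset n Q) :
    pset n P ⊆ pset n Q ∨ pset n Q ⊆ pset n P :=
  (le_total Q.2 P.2).imp (pset_subset_pset_of_mem_of_le haP haQ)
    (pset_subset_pset_of_mem_of_le haQ haP)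

theorem stmt2_general (n : ℕ) (S : Finset (Addr n × ℕ)) (hS : S.Nonempty)
    (a : Addr n) (ha : ∀ P ∈ S, a ∈ pset n P) :
    (∀ P ∈ S, ∀ Q ∈ S, pset n P ⊆ pset n Q ∨ pset n Q ⊆ pset n P) ∧
    ∃ P ∈ S, (∀ Q ∈ S, pset n P ⊆ pset n Q) ∧
      ∀ P' ∈ S, (∀ Q ∈ S, pset n P' ⊆ pset n Q) → pset n P' = pset n P := by
  refine ⟨fun P hP Q hQ => pset_subset_or_subset_of_mem (ha P hP) (ha Q hQ), ?_⟩
  obtain ⟨P, hP, hlongest⟩ := S.exists_max_image Prod.snd hS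
  have hmin : ∀ Q ∈ S, pset n P ⊆ pset n Q := fun Q hQ =>
    pset_subset_pset_of_mem_of_le (ha P hP) (ha Q hQ) (hlongest Q hQ)
  exact ⟨P, hP, hmin, fun P' hP' hP'min => (hP'min P hP).antisymm (hmin P' hP')⟩

/-- Any nonempty finite set of prefixes all containing a common address `a`
    is totally ordered by specificity; in particular it has a most specific
    element, unique up to equality of denoted address sets. -/
theorem stmt2 (n : ℕ) (S : Finset (Addr n × ℕ)) (hS : S.Nonempty)
    (hlen : ∀ P ∈ S, P.2 ≤ n)
    (a : Addr n) (ha : ∀ P ∈ S, a ∈ pset n P) :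
    (∀ P ∈ S, ∀ Q ∈ S, pset n P ⊆ pset n Q ∨ pset n Q ⊆ pset n P) ∧
    ∃ P ∈ S, (∀ Q ∈ S, pset n P ⊆ pset n Q) ∧
      ∀ P' ∈ S, (∀ Q ∈ S, pset n P' ⊆ pset n Q) → pset n P' = pset n P :=
  stmt2_general n S hS a ha
end

section
/- If two destination–source prefix pairs (d₁,s₁) and (d₂,s₂) are in conflict with d₁ < d₂ and s₂ < s₁, then their conflict zone (the set of address pairs matched by both) is exactly the set of pairs matched by (d₁, s₂). -/
/-- If `(d₁,s₁)` and `(d₂,s₂)` are in conflict with `d₁ < d₂` and `s₂ < s₁`,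
    then their conflict zone — the set of address pairs matched by both —
    is exactly the set of pairs matched by `(d₁, s₂)`. -/
theorem stmt6 {α : Type*} (d₁ s₁ d₂ s₂ : Set α)
    (hd : d₁ ⊂ d₂) (hs : s₂ ⊂ s₁) :
    (d₁ ×ˢ s₁) ∩ (d₂ ×ˢ s₂) = d₁ ×ˢ s₂ := by
  rw [Set.prod_inter_prod, Set.inter_eq_left.2 hd.subset, Set.inter_eq_right.2 hs.subset]
end

section
/- A source-specific routing table T is non-ambiguous if and only if it is weakly complete, i.e., for all r₁, r₂ ∈ T, the conflict zone r₁ ∩ r₂ equals the union of the entries of T that are more specific than r₁ ∩ r₂. -/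
/-- A routing table (finite set of entries identified with the sets of
    address pairs they match) is non-ambiguous: every address pair matched by
    at least one entry has a minimum matching entry under inclusion. -/
def NonAmbiguous {α : Type*} (T : Finset (Set α)) : Prop :=
  ∀ a : α, (∃ r ∈ T, a ∈ r) →
    ∃ r ∈ T, a ∈ r ∧ ∀ r' ∈ T, a ∈ r' → r ⊆ r'

/-- Weak completeness: every conflict zone `r₁ ∩ r₂` is exactly the union of
    the entries of `T` more specific than it. -/
def WeaklyComplete {α : Type*} (T : Finset (Set α)) : Prop :=
  ∀ r₁ ∈ T, ∀ r₂ ∈ T, r₁ ∩ r₂ = ⋃₀ {r | r ∈ T ∧ r ⊆ r₁ ∩ r₂}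

/-!
Non-ambiguity gives weak completeness because a point of `r₁ ∩ r₂` lies in its minimum
matching entry, which is contained in both `r₁` and `r₂`. Conversely, take an entry `r`
that is minimal among those matching `a`. For any other matching entry `r'`, weak
completeness places `a` in some entry `s ⊆ r ∩ r'`; minimality forces `s = r`, so `r ⊆ r'`.
-/

section

variable {α : Type*} {T : Finset (Set α)}

theorem NonAmbiguous.weaklyComplete (hT : NonAmbiguous T) : WeaklyComplete T := by
  intro r₁ h₁ r₂ h₂
  refine (Set.sUnion_subset fun r hr => hr.2).antisymm' fun a ha => ?_
  obtain ⟨r, hr, har, hmin⟩ := hT a ⟨r₁, h₁, ha.1⟩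
  exact ⟨r, ⟨hr, Set.subset_inter (hmin r₁ h₁ ha.1) (hmin r₂ h₂ ha.2)⟩, har⟩

theorem WeaklyComplete.subset_of_minimal (hT : WeaklyComplete T) {a : α} {r r' : Set α}
    (hr : Minimal (fun s => s ∈ T ∧ a ∈ s) r) (hr' : r' ∈ T) (har' : a ∈ r') : r ⊆ r' := by
  have ha : a ∈ r ∩ r' := ⟨hr.prop.2, har'⟩
  rw [hT r hr.prop.1 r' hr'] at ha
  obtain ⟨s, ⟨hsT, hsub⟩, has⟩ := ha
  have hsr : s = r := hr.eq_of_le ⟨hsT, has⟩ (hsub.trans Set.inter_subset_left)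
  exact hsr ▸ hsub.trans Set.inter_subset_right

theorem WeaklyComplete.nonAmbiguous (hT : WeaklyComplete T) : NonAmbiguous T := by
  intro a hmatch
  have hfin : {s | s ∈ T ∧ a ∈ s}.Finite := T.finite_toSet.subset fun _ hs => hs.1
  obtain ⟨r, hr⟩ := hfin.exists_minimal hmatch
  exact ⟨r, hr.prop.1, hr.prop.2, fun r' hr' har' => hT.subset_of_minimal hr hr' har'⟩

end

/-- A routing table is non-ambiguous iff it is weakly complete. -/
theorem stmt9 {α : Type*} (T : Finset (Set α)) :
    NonAmbiguous T ↔ WeaklyComplete T :=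
  ⟨NonAmbiguous.weaklyComplete, WeaklyComplete.nonAmbiguous⟩
end

section
/- Let r₁ = (d₁,s₁) and r₂ = (d₂,s₂) be entries in conflict with d₁ < d₂ and s₂ < s₁, and let r_sol = (d₁, s₂) be the disambiguation entry. Then any entry r₃ = (d₃,s₃) in conflict with r_sol is already in conflict with r₁ or with r₂. -/
/-- Two destination–source pairs conflict iff one has a strictly more specific
    destination and a strictly less specific source than the other. -/
def Conflict {α : Type*} (d s d' s' : Set α) : Prop :=
  (d ⊂ d' ∧ s' ⊂ s) ∨ (d' ⊂ d ∧ s ⊂ s')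

/-- If `r₁ = (d₁,s₁)` and `r₂ = (d₂,s₂)` conflict with `d₁ < d₂` and
    `s₂ < s₁`, then any entry `r₃ = (d₃,s₃)` in conflict with the
    disambiguation entry `r_sol = (d₁,s₂)` is already in conflict with
    `r₁` or with `r₂`. -/
theorem stmt11 {α : Type*} (d₁ s₁ d₂ s₂ d₃ s₃ : Set α)
    (hd : d₁ ⊂ d₂) (hs : s₂ ⊂ s₁)
    (h : Conflict d₁ s₂ d₃ s₃) :
    Conflict d₁ s₁ d₃ s₃ ∨ Conflict d₂ s₂ d₃ s₃ := by
  rcases h with ⟨hd₃, hs₃⟩ | ⟨hd₃, hs₃⟩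
  · exact Or.inl (Or.inl ⟨hd₃, hs₃.trans hs⟩)
  · exact Or.inr (Or.inr ⟨hd₃.trans hd, hs₃⟩)
end
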